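/- arXiv:2601.21160 — 4 statements merged into one kernel-verified Lean document; each statement's English description precedes it below -/
import Mathlib

section
/- (Exact uncertainty-set radius for isotropic GMMs; content of Proposition 1 and Theorem 5 in this case.) Let E be a nontrivial real inner product space, x_1, …, x_N ∈ E, γ_1, …, γ_N ≥ 0 with W := Σ_{n=1}^N γ_n > 0, M := W^{-1}·Σ_n γ_n·x_n the weighted mean, and θ' ∈ E. Define S := { ε ∈ ℝ : ε ≥ 0 and for every m ∈ E with ‖m − M‖² ≤ ε, Σ_{n=1}^N γ_n·‖x_n − m‖² ≤ Σ_{n=1}^N γ_n·‖x_n − θ'‖² }. Then ‖θ' − M‖² is the greatest element of S; equivalently, S = [0, ‖θ' − M‖²]. -/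
/-!
Expanding `‖x n - m‖² = ‖(x n - M) + (M - m)‖²` and using that the weighted deviations
`γ n • (x n - M)` sum to zero gives the parallel axis identity
`∑ γ n ‖x n - m‖² = ∑ γ n ‖x n - M‖² + W ‖m - M‖²`. Hence `m` does not increase the objective
relative to `θ'` exactly when `‖m - M‖² ≤ ‖θ' - M‖²`, and since a nontrivial space has points
at every distance from `M`, the admissible squared radii are exactly `[0, ‖θ' - M‖²]`.
-/

open Finset

section CenterMass

variable {ι E : Type*} [NormedAddCommGroup E] [InnerProductSpace ℝ E]
  {s : Finset ι} {w : ι → ℝ}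

theorem Finset.sum_smul_sub_centerMass (hw : ∑ i ∈ s, w i ≠ 0) (z : ι → E) :
    ∑ i ∈ s, w i • (z i - s.centerMass w z) = 0 := by
  simp only [smul_sub, sum_sub_distrib, ← sum_smul, centerMass, smul_inv_smul₀ hw, sub_self]

theorem Finset.sum_mul_norm_sub_sq_eq_add_centerMass (hw : ∑ i ∈ s, w i ≠ 0) (z : ι → E)
    (m : E) :
    ∑ i ∈ s, w i * ‖z i - m‖ ^ 2 =
      ∑ i ∈ s, w i * ‖z i - s.centerMass w z‖ ^ 2 +
        (∑ i ∈ s, w i) * ‖m - s.centerMass w z‖ ^ 2 := by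
  set c := s.centerMass w z
  have hbalance : ∑ i ∈ s, w i • (z i - c) = 0 := sum_smul_sub_centerMass hw z
  have hexpand : ∀ i, w i * ‖z i - m‖ ^ 2 =
      w i * ‖z i - c‖ ^ 2 + 2 * inner ℝ (w i • (z i - c)) (c - m) + w i * ‖m - c‖ ^ 2 := by
    intro i
    rw [← sub_add_sub_cancel (z i) c m, norm_add_sq_real, real_inner_smul_left,
      norm_sub_rev c m]
    ring
  simp only [hexpand, sum_add_distrib, ← mul_sum, ← sum_inner, hbalance, inner_zero_left,
    mul_zero, add_zero, ← sum_mul]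

theorem Finset.sum_mul_norm_sub_sq_le_iff (hw : 0 < ∑ i ∈ s, w i) (z : ι → E) (m θ : E) :
    ∑ i ∈ s, w i * ‖z i - m‖ ^ 2 ≤ ∑ i ∈ s, w i * ‖z i - θ‖ ^ 2 ↔
      ‖m - s.centerMass w z‖ ^ 2 ≤ ‖θ - s.centerMass w z‖ ^ 2 := by
  rw [sum_mul_norm_sub_sq_eq_add_centerMass hw.ne' z m,
    sum_mul_norm_sub_sq_eq_add_centerMass hw.ne' z θ, add_le_add_iff_left,
    mul_le_mul_iff_of_pos_left hw]

end CenterMass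

theorem forall_norm_sub_sq_le_imp_le_iff {E : Type*} [NormedAddCommGroup E] [NormedSpace ℝ E]
    [Nontrivial E] (c : E) {ε r : ℝ} (hε : 0 ≤ ε) :
    (∀ m : E, ‖m - c‖ ^ 2 ≤ ε → ‖m - c‖ ^ 2 ≤ r) ↔ ε ≤ r := by
  refine ⟨fun h => ?_, fun hεr m hm => hm.trans hεr⟩
  obtain ⟨v, hv⟩ := exists_norm_eq E (Real.sqrt_nonneg ε)
  have hdist : ‖(v + c) - c‖ ^ 2 = ε := by rw [add_sub_cancel_right, hv, Real.sq_sqrt hε]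
  exact hdist ▸ h (v + c) hdist.le

theorem gmm_uncertainty_radius_exact_general
    {E : Type*} [NormedAddCommGroup E] [InnerProductSpace ℝ E] [Nontrivial E]
    (N : ℕ) (x : Fin N → E) (γ : Fin N → ℝ)
    (W : ℝ) (hW : W = ∑ n, γ n) (hWpos : 0 < W)
    (M : E) (hM : M = W⁻¹ • ∑ n, γ n • x n) (θ' : E)
    (S : Set ℝ)
    (hS : S = {ε : ℝ | 0 ≤ ε ∧ ∀ m : E, ‖m - M‖ ^ 2 ≤ ε →
      ∑ n, γ n * ‖x n - m‖ ^ 2 ≤ ∑ n, γ n * ‖x n - θ'‖ ^ 2}) :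
    IsGreatest S (‖θ' - M‖ ^ 2) ∧ S = Set.Icc 0 (‖θ' - M‖ ^ 2) := by
  subst hW
  have hM_eq : M = univ.centerMass γ x := hM
  have hS_eq : S = Set.Icc 0 (‖θ' - M‖ ^ 2) := by
    ext ε
    simp only [hS, Set.mem_ofPred_eq, Set.mem_Icc, hM_eq, sum_mul_norm_sub_sq_le_iff hWpos]
    exact and_congr_right (forall_norm_sub_sq_le_imp_le_iff _)
  exact ⟨hS_eq ▸ isGreatest_Icc (sq_nonneg _), hS_eq⟩

/-- Exact uncertainty-set radius for isotropic GMMs: the feasible set of squared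
radii `ε` such that every point of the ball `B(M, √ε)` does not decrease the
weighted objective relative to `θ'` has greatest element `‖θ' - M‖²`, and equals
the interval `[0, ‖θ' - M‖²]`. -/
theorem gmm_uncertainty_radius_exact
    {E : Type*} [NormedAddCommGroup E] [InnerProductSpace ℝ E] [Nontrivial E]
    (N : ℕ) (x : Fin N → E) (γ : Fin N → ℝ) (hγ : ∀ n, 0 ≤ γ n)
    (W : ℝ) (hW : W = ∑ n, γ n) (hWpos : 0 < W)
    (M : E) (hM : M = W⁻¹ • ∑ n, γ n • x n) (θ' : E)
    (S : Set ℝ)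
    (hS : S = {ε : ℝ | 0 ≤ ε ∧ ∀ m : E, ‖m - M‖ ^ 2 ≤ ε →
      ∑ n, γ n * ‖x n - m‖ ^ 2 ≤ ∑ n, γ n * ‖x n - θ'‖ ^ 2}) :
    IsGreatest S (‖θ' - M‖ ^ 2) ∧ S = Set.Icc 0 (‖θ' - M‖ ^ 2) :=
  gmm_uncertainty_radius_exact_general N x γ W hW hWpos M hM θ' S hS
end

section
/- (Proposition 1: existence and uniqueness of the maximal uncertainty-set radius.) Let E be a real normed vector space, f : E → ℝ continuous, M ∈ E, λ > 0, and suppose f(m) ≤ f(M) − (λ/2)·‖m − M‖² for every m ∈ E (as holds when M is the maximizer of a λ-strongly concave f). Let θ' ∈ E with f(θ') ≤ f(M). Then the set S := { ε ∈ ℝ : ε ≥ 0 and for every m ∈ E with ‖m − M‖² ≤ ε, f(θ') ≤ f(m) } is nonempty, bounded above, and possesses a greatest element. -/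
/-!
With `C = {m | f θ' ≤ f m}`, the radius `ε` is feasible iff `closedBall M √ε ⊆ C`. As `C` is closed
and closed balls are closures of open balls, this holds exactly for `√ε ≤ infDist M Cᶜ`, so the
feasible set is `Icc 0 (infDist M Cᶜ ^ 2)`. This needs `Cᶜ` nonempty (the distance to `∅` is the
junk value `0`): the quadratic decay of `f` makes `C` bounded, and `E` is unbounded.
-/

open Set Metric Bornology

section Seminormed

variable {E : Type*} [SeminormedAddCommGroup E]

theorem sq_norm_sub_le_iff_mem_closedBall_sqrt {x : E} {ε : ℝ} (hε : 0 ≤ ε) (m : E) :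
    ‖m - x‖ ^ 2 ≤ ε ↔ m ∈ closedBall x √ε := by
  rw [mem_closedBall, dist_eq_norm, Real.le_sqrt (norm_nonneg _) hε]

theorem isBounded_superlevelSet_of_le_sub_sq {f : E → ℝ} {M : E} {lam : ℝ} (hlam : 0 < lam)
    (hquad : ∀ m : E, f m ≤ f M - lam / 2 * ‖m - M‖ ^ 2) (c : ℝ) :
    IsBounded {m | c ≤ f m} := by
  refine (isBounded_closedBall (x := M) (r := √(2 / lam * (f M - c)))).subset fun m hm ↦ ?_
  have hm : c ≤ f m := hm
  rw [mem_closedBall, dist_eq_norm]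
  refine Real.le_sqrt_of_sq_le ?_
  rw [div_mul_eq_mul_div, le_div_iff₀ hlam]
  nlinarith [hquad m]

end Seminormed

section Normed

variable {F : Type*} [NormedAddCommGroup F] [NormedSpace ℝ F] {s : Set F} {x : F}

theorem nonempty_compl_of_isBounded [Nontrivial F] (hs : IsBounded s) : sᶜ.Nonempty :=
  nonempty_compl.2 fun h ↦ NormedSpace.unbounded_univ ℝ F (h ▸ hs)

theorem closedBall_subset_iff_le_infDist_compl (hs : IsClosed s) (hx : x ∈ s)
    (hsc : sᶜ.Nonempty) {r : ℝ} : closedBall x r ⊆ s ↔ r ≤ infDist x sᶜ := by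
  refine ⟨fun h ↦ (le_infDist hsc).2 fun y hy ↦ ?_, fun h ↦ ?_⟩
  · by_contra! hlt
    exact hy (h (mem_closedBall'.2 hlt.le))
  · calc closedBall x r ⊆ closedBall x (infDist x sᶜ) := closedBall_subset_closedBall h
      _ ⊆ closure s := closedBall_infDist_compl_subset_closure hx
      _ = s := hs.closure_eq

theorem setOf_sq_radius_subset_eq_Icc_infDist (hs : IsClosed s) (hx : x ∈ s)
    (hsc : sᶜ.Nonempty) :
    {ε : ℝ | 0 ≤ ε ∧ ∀ m : F, ‖m - x‖ ^ 2 ≤ ε → m ∈ s} = Icc 0 (infDist x sᶜ ^ 2) := by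
  ext ε
  refine and_congr_right fun hε ↦ ?_
  simp only [sq_norm_sub_le_iff_mem_closedBall_sqrt hε]
  rw [← subset_def, closedBall_subset_iff_le_infDist_compl hs hx hsc,
    Real.sqrt_le_left infDist_nonneg]

end Normed

/-- Existence and uniqueness of the maximal uncertainty-set radius
(Proposition 1): if `f` is continuous, `f m ≤ f M - (λ/2)‖m - M‖²` for all `m`
(as for the maximizer of a λ-strongly concave function), and `f θ' ≤ f M`, then
the feasible set of squared radii is nonempty, bounded above, and has a
greatest element. -/
theorem uncertainty_radius_exists_greatest
    {E : Type*} [NormedAddCommGroup E] [NormedSpace ℝ E] [Nontrivial E]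
    (f : E → ℝ) (hf : Continuous f) (M : E) (lam : ℝ) (hlam : 0 < lam)
    (hquad : ∀ m : E, f m ≤ f M - lam / 2 * ‖m - M‖ ^ 2)
    (θ' : E) (hθ' : f θ' ≤ f M)
    (S : Set ℝ)
    (hS : S = {ε : ℝ | 0 ≤ ε ∧ ∀ m : E, ‖m - M‖ ^ 2 ≤ ε → f θ' ≤ f m}) :
    S.Nonempty ∧ BddAbove S ∧ ∃ ε : ℝ, IsGreatest S ε := by
  let C : Set E := {m | f θ' ≤ f m}
  have hC : IsClosed C := isClosed_le continuous_const hf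
  have hCc : Cᶜ.Nonempty :=
    nonempty_compl_of_isBounded (isBounded_superlevelSet_of_le_sub_sq hlam hquad (f θ'))
  have hS_Icc : S = Icc 0 (infDist M Cᶜ ^ 2) :=
    hS.trans (setOf_sq_radius_subset_eq_Icc_infDist hC hθ' hCc)
  have hgreatest := hS_Icc ▸ isGreatest_Icc (sq_nonneg (infDist M Cᶜ))
  exact ⟨hgreatest.nonempty, hgreatest.bddAbove, _, hgreatest⟩
end

section
/- (ℓ2-sensitivity of the per-cluster GMM M-step; core of Theorem 11.) Let E be a real inner product space, B ≥ 0, B_γ > 0, s ∈ E, w ≥ 0, x*, x' ∈ E, and γ*, γ' ∈ ℝ. Suppose ‖s‖ ≤ w·B, ‖x*‖ ≤ B, ‖x'‖ ≤ B, 0 ≤ γ* ≤ γ' ≤ 1, and w + γ* ≥ B_γ. Then ‖ (s + γ*·x*)/(w + γ*) − (s + γ'·x')/(w + γ') ‖ ≤ 3B/B_γ + 2B/B_γ². -/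
/-- ℓ²-sensitivity of the per-cluster GMM M-step (core of the differential
privacy theorem): swapping the differing sample of two neighboring datasets
moves the weighted-mean M-step output by at most `3B/B_γ + 2B/B_γ²`. -/
theorem gmm_mstep_sensitivity
    {E : Type*} [NormedAddCommGroup E] [InnerProductSpace ℝ E]
    (B Bγ : ℝ) (hB : 0 ≤ B) (hBγ : 0 < Bγ)
    (s : E) (w : ℝ) (hw : 0 ≤ w) (xstar xprime : E) (γstar γprime : ℝ)
    (hs : ‖s‖ ≤ w * B) (hxstar : ‖xstar‖ ≤ B) (hxprime : ‖xprime‖ ≤ B)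
    (hγ0 : 0 ≤ γstar) (hγle : γstar ≤ γprime) (hγ1 : γprime ≤ 1)
    (hden : Bγ ≤ w + γstar) :
    ‖(w + γstar)⁻¹ • (s + γstar • xstar) -
      (w + γprime)⁻¹ • (s + γprime • xprime)‖ ≤ 3 * B / Bγ + 2 * B / Bγ ^ 2 := by
  set a := w + γstar with ha_def
  set b := w + γprime with hb_def
  have ha : 0 < a := lt_of_lt_of_le hBγ hden
  have hab : a ≤ b := by simp only [ha_def, hb_def]; linarith
  have hb : 0 < b := ha.trans_le hab
  have key : a⁻¹ • (s + γstar • xstar) - b⁻¹ • (s + γprime • xprime)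
      = (a⁻¹ - b⁻¹) • s + (a⁻¹ * γstar) • xstar - (b⁻¹ * γprime) • xprime := by
    simp only [smul_add, sub_smul, mul_smul]
    abel
  rw [key]
  have hinv : a⁻¹ ≤ Bγ⁻¹ := inv_anti₀ hBγ hden
  have hinvb : b⁻¹ ≤ a⁻¹ := inv_anti₀ ha hab
  have hd0 : 0 ≤ a⁻¹ - b⁻¹ := sub_nonneg.mpr hinvb
  -- term 1
  have t1 : ‖(a⁻¹ - b⁻¹) • s‖ ≤ B / Bγ := by
    rw [norm_smul, Real.norm_eq_abs, abs_of_nonneg hd0]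
    have h1 : (a⁻¹ - b⁻¹) * ‖s‖ ≤ (a⁻¹ - b⁻¹) * (w * B) :=
      mul_le_mul_of_nonneg_left hs hd0
    have h2 : (a⁻¹ - b⁻¹) * (w * B) ≤ a⁻¹ * B := by
      have hsub : a⁻¹ - b⁻¹ = (b - a) / (a * b) := by
        field_simp
      rw [hsub]
      have hgoal : (b - a) / (a * b) * w ≤ a⁻¹ := by
        rw [div_mul_eq_mul_div, div_le_iff₀ (mul_pos ha hb)]
        have : a⁻¹ * (a * b) = b := by field_simp
        rw [this]
        nlinarith
      calc (b - a) / (a * b) * (w * B) = ((b - a) / (a * b) * w) * B := by ring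
        _ ≤ a⁻¹ * B := mul_le_mul_of_nonneg_right hgoal hB
    have h3 : a⁻¹ * B ≤ Bγ⁻¹ * B := mul_le_mul_of_nonneg_right hinv hB
    rw [div_eq_inv_mul]
    linarith
  -- term 2
  have t2 : ‖(a⁻¹ * γstar) • xstar‖ ≤ B / Bγ := by
    rw [norm_smul, Real.norm_eq_abs, abs_of_nonneg (by positivity)]
    have : a⁻¹ * γstar * ‖xstar‖ ≤ a⁻¹ * 1 * B := by
      apply mul_le_mul (mul_le_mul_of_nonneg_left (hγle.trans hγ1) (by positivity))
        hxstar (norm_nonneg _) (by positivity)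
    rw [div_eq_inv_mul]
    nlinarith
  -- term 3
  have t3 : ‖(b⁻¹ * γprime) • xprime‖ ≤ B / Bγ := by
    have hγp : 0 ≤ γprime := hγ0.trans hγle
    rw [norm_smul, Real.norm_eq_abs, abs_of_nonneg (by positivity)]
    have : b⁻¹ * γprime * ‖xprime‖ ≤ a⁻¹ * 1 * B := by
      apply mul_le_mul (mul_le_mul hinvb hγ1 (hγ0.trans hγle) (le_of_lt (by positivity)))
        hxprime (norm_nonneg _) (by positivity)
    rw [div_eq_inv_mul]
    nlinarith
  have tri : ‖(a⁻¹ - b⁻¹) • s + (a⁻¹ * γstar) • xstar - (b⁻¹ * γprime) • xprime‖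
      ≤ ‖(a⁻¹ - b⁻¹) • s‖ + ‖(a⁻¹ * γstar) • xstar‖ + ‖(b⁻¹ * γprime) • xprime‖ := by
    calc _ ≤ ‖(a⁻¹ - b⁻¹) • s + (a⁻¹ * γstar) • xstar‖ + ‖(b⁻¹ * γprime) • xprime‖ :=
          norm_sub_le _ _
      _ ≤ _ := by gcongr; exact norm_add_le _ _
  have hextra : 0 ≤ 2 * B / Bγ ^ 2 := by positivity
  have : 3 * (B / Bγ) = 3 * B / Bγ := by ring
  linarith
end

section
/- (Deterministic core of Theorem 4: exact recovery of cluster identities by radius-based merging.) Let E be a real normed vector space, I a type of true clusters, and μ : I → E with ‖μ(i) − μ(j)‖ ≥ R > 0 for all i ≠ j. Let A be a type of estimates, c : A → I an assignment, m : A → E, and r : A → ℝ with 0 ≤ r(a) < R/4 and ‖m(a) − μ(c(a))‖ ≤ r(a) for every a ∈ A. Then for all a, b ∈ A: ‖m(a) − m(b)‖ ≤ r(a) + r(b) if and only if c(a) = c(b). Consequently, the merging relation used by the server partitions the estimates exactly according to their true clusters. -/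
/-- Deterministic core of the number-of-clusters inference theorem: if true
cluster centers are `R`-separated and each estimate lies within its radius
`r a < R/4` of its true center, then the server's radius-based merging rule
matches two estimates exactly when they estimate the same true cluster. -/
theorem radius_merging_exact_recovery
    {E : Type*} [NormedAddCommGroup E] [NormedSpace ℝ E]
    {I A : Type*} (μ : I → E) (R : ℝ) (hR : 0 < R)
    (hsep : ∀ i j : I, i ≠ j → R ≤ ‖μ i - μ j‖)
    (c : A → I) (m : A → E) (r : A → ℝ)
    (hr0 : ∀ a, 0 ≤ r a) (hr : ∀ a, r a < R / 4)
    (hm : ∀ a, ‖m a - μ (c a)‖ ≤ r a) :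
    ∀ a b : A, ‖m a - m b‖ ≤ r a + r b ↔ c a = c b := by
  intro a b
  constructor
  · intro h
    by_contra hne
    have hsep' := hsep _ _ hne
    have h1 := hm a
    have h2 := hm b
    have : ‖μ (c a) - μ (c b)‖ ≤ ‖μ (c a) - m a‖ + ‖m a - m b‖ + ‖m b - μ (c b)‖ := by
      have := norm_add_le (μ (c a) - m a + (m a - m b)) (m b - μ (c b))
      have h' := norm_add_le (μ (c a) - m a) (m a - m b)
      calc ‖μ (c a) - μ (c b)‖ = ‖μ (c a) - m a + (m a - m b) + (m b - μ (c b))‖ := by abel_nf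
        _ ≤ ‖μ (c a) - m a + (m a - m b)‖ + ‖m b - μ (c b)‖ := norm_add_le _ _
        _ ≤ ‖μ (c a) - m a‖ + ‖m a - m b‖ + ‖m b - μ (c b)‖ := by linarith
    rw [norm_sub_rev] at h1
    have hra := hr a
    have hrb := hr b
    linarith
  · intro h
    calc ‖m a - m b‖ = ‖m a - μ (c a) + (μ (c b) - m b)‖ := by rw [h]; abel_nf
      _ ≤ ‖m a - μ (c a)‖ + ‖μ (c b) - m b‖ := norm_add_le _ _
      _ ≤ r a + r b := by
          have := hm b; rw [norm_sub_rev] at this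
          linarith [hm a]
end
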